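/- arXiv:1503.03762 — 3 statements merged into one kernel-verified Lean document; each statement's English description precedes it below -/
import Mathlib

section
/- Let v < K be real numbers and let (x_n)_{n≥0} be a sequence of real numbers with x_0 = 0 and x_{i+1} − x_i ≤ K for all i ≥ 0. Then for all natural numbers m ≤ n, if x_n > (n−m)v + Km, there exists i ≤ n−m such that for all j ≤ m, x_{i+j} − x_i ≥ v·j. -/
/-- Lemma 4.1 of the paper: a deterministic lemma about real sequences.
If `x 0 = 0`, all steps are at most `K`, and `x n > (n-m)v + Km`, then some
stretch of length `m` stays above the line of slope `v`. -/
theorem stmt0 (v K : ℝ) (hvK : v < K) (x : ℕ → ℝ) (hx0 : x 0 = 0)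
    (hstep : ∀ i : ℕ, x (i + 1) - x i ≤ K) (m n : ℕ) (hmn : m ≤ n)
    (hxn : x n > ((n : ℝ) - (m : ℝ)) * v + K * (m : ℝ)) :
    ∃ i ≤ n - m, ∀ j ≤ m, x (i + j) - x i ≥ v * (j : ℝ) := by
  by_contra hcon
  push_neg at hcon
  -- hcon : ∀ i ≤ n - m, ∃ j ≤ m, x (i + j) - x i < v * j
  rcases Nat.eq_zero_or_pos m with hm | hm
  · obtain ⟨j, hj, hlt⟩ := hcon 0 (Nat.zero_le _)
    subst hm
    interval_cases j
    simp at hlt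
  have key : ∀ d i, i ≤ n → n - i ≤ d → x i ≤ v * i →
      ∃ s, s ≤ n ∧ n - m < s ∧ x s ≤ v * s := by
    intro d
    induction d with
    | zero =>
      intro i hi hd hxi
      have hin : i = n := by omega
      exact ⟨n, le_refl n, by omega, hin ▸ hxi⟩
    | succ d ih =>
      intro i hi hd hxi
      by_cases h : i ≤ n - m
      · obtain ⟨j, hjm, hlt⟩ := hcon i h
        have hj1 : 1 ≤ j := by
          rcases Nat.eq_zero_or_pos j with rfl | hj; · simp at hlt
          exact hj
        have hij : i + j ≤ n := by omega
        apply ih (i + j) hij (by omega)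
        push_cast
        nlinarith
      · exact ⟨i, hi, by omega, hxi⟩
  obtain ⟨s, hsn, hms, hxs⟩ := key n 0 (Nat.zero_le _) (by omega) (by simp [hx0])
  have tel : ∀ t u, x (u + t) - x u ≤ K * t := by
    intro t
    induction t with
    | zero => simp
    | succ t ih =>
      intro u
      have h1 := hstep (u + t)
      have h2 := ih u
      push_cast
      have : u + (t + 1) = (u + t) + 1 := by omega
      rw [this]
      push_cast at h2 ⊢
      linarith
  have htel := tel (n - s) s
  rw [show s + (n - s) = n by omega] at htel
  have hcast : ((n - s : ℕ) : ℝ) = (n : ℝ) - (s : ℝ) := by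
    push_cast [Nat.cast_sub hsn]; ring
  rw [hcast] at htel
  have hs1 : ((n : ℝ) - (m : ℝ)) + 1 ≤ (s : ℝ) := by
    have : n - m + 1 ≤ s := by omega
    have := (Nat.cast_le (α := ℝ)).2 this
    push_cast [Nat.cast_sub hmn] at this
    linarith
  have hsle : (s : ℝ) ≤ (n : ℝ) := Nat.cast_le.2 hsn
  nlinarith [mul_le_mul_of_nonneg_left hs1 (le_of_lt (sub_pos.2 hvK))]
end

section
/- Fix real parameters C* > 0, α > 0, θ > 0 and λ > 0 such that C*/λ^α − λ/(α+1) = θ. Then for every t ∈ [0,1], θ·t − λ·(1−t)^{1/(α+1)} − (α+1)·C*·λ^{−α}·(1 − (1−t)^{1/(α+1)}) ≤ −λ, with equality at t = 0. -/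
/-- The optimization step concluding the proof of Lemma 3.2 of the paper: if
`C*/λ^α − λ/(α+1) = θ`, then for every `t ∈ [0,1]`,
`θt − λ(1−t)^{1/(α+1)} − (α+1)C*λ^{−α}(1 − (1−t)^{1/(α+1)}) ≤ −λ`, with equality at `t = 0`. -/
theorem stmt8 (Cs α θ l : ℝ) (hCs : 0 < Cs) (hα : 0 < α) (hθ : 0 < θ) (hl : 0 < l)
    (h : Cs / l ^ α - l / (α + 1) = θ) :
    (∀ t ∈ Set.Icc (0 : ℝ) 1,
        θ * t - l * (1 - t) ^ (1 / (α + 1))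
          - (α + 1) * Cs * l ^ (-α) * (1 - (1 - t) ^ (1 / (α + 1))) ≤ -l) ∧
    θ * 0 - l * (1 - 0) ^ (1 / (α + 1))
        - (α + 1) * Cs * l ^ (-α) * (1 - (1 - 0) ^ (1 / (α + 1))) = -l := by
  have hα1 : (0:ℝ) < α + 1 := by linarith
  have hlα : (0:ℝ) < l ^ α := Real.rpow_pos_of_pos hl α
  have h2 : (α + 1) * Cs * l ^ (-α) = (α + 1) * θ + l := by
    have hCd : Cs = (θ + l / (α + 1)) * l ^ α := by
      rw [← div_eq_iff hlα.ne']; linarith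
    rw [Real.rpow_neg hl.le, hCd]
    field_simp
  constructor
  · rintro t ⟨ht0, ht1⟩
    set u : ℝ := (1 - t) ^ (1 / (α + 1)) with hu
    have h1t : 0 ≤ 1 - t := by linarith
    have hu0 : 0 ≤ u := Real.rpow_nonneg h1t _
    have huα : u ^ (α + 1) = 1 - t := by
      rw [hu, ← Real.rpow_mul h1t, one_div, inv_mul_cancel₀ hα1.ne', Real.rpow_one]
    have hb : 1 + (α + 1) * (u - 1) ≤ u ^ (α + 1) := by
      have := one_add_mul_self_le_rpow_one_add
        (by linarith : (-1:ℝ) ≤ u - 1) (by linarith : (1:ℝ) ≤ α + 1)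
      have e : (1 + (u - 1)) = u := by ring
      rwa [e] at this
    have ht' : t = 1 - u ^ (α + 1) := by linarith
    rw [ht', h2]
    nlinarith [mul_nonneg hθ.le (sub_nonneg.mpr hb)]
  · norm_num [Real.one_rpow]
end

section
/- Let s and t be finite multisets of real numbers and let M ≤ N be natural numbers with M ≤ card(s) and N ≤ card(t). Suppose that for every x ∈ ℝ the number of elements of s that are ≥ x is at most the number of elements of t that are ≥ x. Then for every x ∈ ℝ, the number of elements among the M largest elements of s that are ≥ x is at most the number of elements among the N largest elements of t that are ≥ x; i.e., the selection of the M (resp. N) rightmost particles preserves the domination order. -/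
lemma countP_drop_sorted (l : List ℝ) (k : ℕ) (x : ℝ) (hl : l.Pairwise (· ≤ ·)) :
    (l.drop k).countP (fun a => decide (x ≤ a))
      = min (l.length - k) (l.countP (fun a => decide (x ≤ a))) := by
  set p : ℝ → Bool := fun a => decide (x ≤ a) with hp
  have hsplit : l = l.take k ++ l.drop k := (List.take_append_drop k l).symm
  have hcount : l.countP p = (l.take k).countP p + (l.drop k).countP p := by
    conv_lhs => rw [hsplit]
    exact List.countP_append
  by_cases h0 : (l.take k).countP p = 0
  · have hle : (l.drop k).countP p ≤ (l.drop k).length := List.countP_le_length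
    rw [List.length_drop] at hle
    omega
  · -- some element of take satisfies p, so all of drop satisfy p
    have ⟨a, ha, hpa⟩ : ∃ a ∈ l.take k, p a = true := by
      by_contra h
      push_neg at h
      exact h0 (List.countP_eq_zero.mpr fun a ha => by simpa using h a ha)
    have hpair : l.Pairwise (· ≤ ·) := hl
    rw [hsplit] at hpair
    have hab : ∀ b ∈ l.drop k, (a : ℝ) ≤ b :=
      fun b hb => (List.pairwise_append.mp hpair).2.2 a ha b hb
    have hall : (l.drop k).countP p = (l.drop k).length := by
      apply List.countP_eq_length.mpr
      intro b hb
      simp only [hp, decide_eq_true_eq] at hpa ⊢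
      exact le_trans hpa (hab b hb)
    rw [List.length_drop] at hall
    have h2 : l.countP p ≥ l.length - k := by
      have := hcount
      omega
    omega

/-- Selection of the rightmost particles preserves the domination order: if for every `x` the
number of elements of `s` that are `≥ x` is at most that of `t`, and `M ≤ N`, `M ≤ card s`,
`N ≤ card t`, then for every `x` the number of elements `≥ x` among the `M` largest elements
of `s` (the last `M` entries of the increasing sort) is at most the number of elements `≥ x`
among the `N` largest elements of `t`. -/
theorem stmt12 (s t : Multiset ℝ) (M N : ℕ) (hMN : M ≤ N)
    (hMs : M ≤ Multiset.card s) (hNt : N ≤ Multiset.card t)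
    (hdom : ∀ x : ℝ,
      Multiset.card (s.filter (fun a => x ≤ a)) ≤ Multiset.card (t.filter (fun a => x ≤ a))) :
    ∀ x : ℝ,
      ((Multiset.sort s (· ≤ ·)).drop (Multiset.card s - M)).countP (fun a => decide (x ≤ a))
        ≤ ((Multiset.sort t (· ≤ ·)).drop (Multiset.card t - N)).countP
            (fun a => decide (x ≤ a)) := by
  intro x
  have hs := countP_drop_sorted (Multiset.sort s (· ≤ ·)) (Multiset.card s - M) x
    (Multiset.pairwise_sort s _)
  have ht := countP_drop_sorted (Multiset.sort t (· ≤ ·)) (Multiset.card t - N) x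
    (Multiset.pairwise_sort t _)
  have hls : (Multiset.sort s (· ≤ ·)).length = Multiset.card s := Multiset.length_sort _
  have hlt : (Multiset.sort t (· ≤ ·)).length = Multiset.card t := Multiset.length_sort _
  have hcs : (Multiset.sort s (· ≤ ·)).countP (fun a => decide (x ≤ a))
      = Multiset.card (s.filter (fun a => x ≤ a)) := by
    rw [← Multiset.countP_eq_card_filter]
    conv_rhs => rw [← Multiset.sort_eq s (· ≤ ·)]
    rfl
  have hct : (Multiset.sort t (· ≤ ·)).countP (fun a => decide (x ≤ a))
      = Multiset.card (t.filter (fun a => x ≤ a)) := by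
    rw [← Multiset.countP_eq_card_filter]
    conv_rhs => rw [← Multiset.sort_eq t (· ≤ ·)]
    rfl
  have hd := hdom x
  rw [hs, ht, hls, hlt, hcs, hct]
  omega
end
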